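/- arXiv:math/0404474 — 12 statements merged into one kernel-verified Lean document; each statement's English description precedes it below -/
import Mathlib

section
/- Let q be a homogeneous polynomial of degree n in n real variables with nonnegative real coefficients, and let (α₁,...,αₙ) be a vector with positive entries such that ∑ᵢ |αᵢ·(∂q/∂αᵢ)(α)/q(α) − 1|² ≤ 1/n. Then for every subset S ⊆ {1,...,n}, there exists an exponent vector (r₁,...,rₙ) in the support of q with ∑_{i∈S} rᵢ ≥ |S|. -/
/-!
Write `βᵢ = αᵢ (∂ᵢq)(α) / q(α) - 1`. By Euler's identity `∑ᵢ βᵢ = 0`. If some `S` had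
`∑_{i∈S} rᵢ ≤ |S| - 1` for every `r` in the support, then, the coefficients being nonnegative,
`∑_{i∈S} αᵢ (∂ᵢq)(α) ≤ (|S| - 1) q(α)`, i.e. `∑_{i∈S} βᵢ ≤ -1`. Cauchy–Schwarz then gives
`1 ≤ |S| ∑ βᵢ² ≤ |S| / n`, forcing `S = {1, …, n}`, which contradicts `∑ᵢ βᵢ = 0`.
-/

open MvPolynomial Finset

theorem neg_one_lt_sum_of_sum_eq_zero_of_sum_sq_le {ι : Type*} [Fintype ι] {x : ι → ℝ}
    (hsum : ∑ i, x i = 0) (hsq : ∑ i, x i ^ 2 ≤ 1 / Fintype.card ι) (S : Finset ι) :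
    -1 < ∑ i ∈ S, x i := by
  by_contra! hS
  have hS_ne_univ : S ≠ univ := by
    rintro rfl
    linarith
  have hcard : (#S : ℝ) < Fintype.card ι := by
    exact_mod_cast (card_lt_iff_ne_univ S).2 hS_ne_univ
  have hcard_pos : (0 : ℝ) < Fintype.card ι := (Nat.cast_nonneg _).trans_lt hcard
  refine lt_irrefl (1 : ℝ) ?_
  calc 1 ≤ (∑ i ∈ S, x i) ^ 2 := by nlinarith
    _ ≤ #S * ∑ i ∈ S, x i ^ 2 := sq_sum_le_card_mul_sum_sq
    _ ≤ #S * (1 / Fintype.card ι) := by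
      gcongr
      exact (sum_le_univ_sum_of_nonneg fun i => sq_nonneg (x i)).trans hsq
    _ < 1 := by rwa [mul_one_div, div_lt_one hcard_pos]

namespace MvPolynomial

variable {R σ : Type*}

theorem sum_X_mul_pderiv_eq_sum_monomial [CommSemiring R] (S : Finset σ)
    (φ : MvPolynomial σ R) :
    ∑ i ∈ S, X i * pderiv i φ = ∑ m ∈ φ.support, (∑ i ∈ S, m i) • monomial m (φ.coeff m) := by
  conv_lhs => rw [φ.as_sum]
  simp_rw [map_sum, mul_sum, X_mul_pderiv_monomial, sum_smul]
  exact sum_comm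

theorem sum_mul_eval_pderiv_eq_sum [CommSemiring R] (S : Finset σ) (α : σ → R)
    (φ : MvPolynomial σ R) :
    ∑ i ∈ S, α i * eval α (pderiv i φ) =
      ∑ m ∈ φ.support, (∑ i ∈ S, m i : R) * eval α (monomial m (φ.coeff m)) := by
  simpa [map_sum, nsmul_eq_mul] using congrArg (eval α) (sum_X_mul_pderiv_eq_sum_monomial S φ)

theorem sum_mul_eval_pderiv_le [CommSemiring R] [PartialOrder R] [IsOrderedRing R]
    {φ : MvPolynomial σ R} (hφ : ∀ m, 0 ≤ φ.coeff m) {α : σ → R} (hα : ∀ i, 0 ≤ α i)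
    {S : Finset σ} {c : R} (hc : ∀ m ∈ φ.support, (∑ i ∈ S, m i : R) ≤ c) :
    ∑ i ∈ S, α i * eval α (pderiv i φ) ≤ c * eval α φ := by
  conv_rhs => rw [φ.as_sum, map_sum, mul_sum]
  rw [sum_mul_eval_pderiv_eq_sum]
  refine sum_le_sum fun m hm => mul_le_mul_of_nonneg_right (hc m hm) ?_
  rw [eval_monomial]
  exact mul_nonneg (hφ m) (prod_nonneg fun i _ => pow_nonneg (hα i) _)

theorem IsHomogeneous.sum_mul_eval_pderiv [CommSemiring R] [Fintype σ] {n : ℕ}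
    {φ : MvPolynomial σ R} (hφ : φ.IsHomogeneous n) (α : σ → R) :
    ∑ i, α i * eval α (pderiv i φ) = n * eval α φ := by
  simpa [map_sum, nsmul_eq_mul] using congrArg (eval α) hφ.sum_X_mul_pderiv

end MvPolynomial

theorem stmt0_general (n : ℕ) (q : MvPolynomial (Fin n) ℝ)
    (hq : q.IsHomogeneous n) (hcoeff : ∀ m, 0 ≤ q.coeff m)
    (α : Fin n → ℝ) (hα : ∀ i, 0 < α i) (hpos : 0 < eval α q)
    (hds : ∑ i, (α i * eval α (pderiv i q) / eval α q - 1) ^ 2 ≤ 1 / (n : ℝ)) :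
    ∀ S : Finset (Fin n), ∃ r ∈ q.support, (S.card : ℕ) ≤ ∑ i ∈ S, r i := by
  intro S
  by_contra! hS
  set β : Fin n → ℝ := fun i => α i * eval α (pderiv i q) / eval α q - 1
  have hβ (T : Finset (Fin n)) :
      ∑ i ∈ T, β i = (∑ i ∈ T, α i * eval α (pderiv i q)) / eval α q - #T := by
    simp [β, sum_sub_distrib, sum_div]
  have hβ_sum : ∑ i, β i = 0 := by
    rw [hβ, hq.sum_mul_eval_pderiv, mul_div_cancel_right₀ _ hpos.ne']
    simp
  have hβ_sum_S : ∑ i ∈ S, β i ≤ -1 := by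
    have hle : ∑ i ∈ S, α i * eval α (pderiv i q) ≤ (#S - 1 : ℝ) * eval α q :=
      sum_mul_eval_pderiv_le hcoeff (fun i => (hα i).le) fun m hm => by
        rw [le_sub_iff_add_le]
        exact_mod_cast hS m hm
    rw [hβ]
    linarith [(div_le_iff₀ hpos).2 hle]
  exact (neg_one_lt_sum_of_sum_eq_zero_of_sum_sq_le hβ_sum (by simpa using hds) S).not_ge
    hβ_sum_S

theorem stmt0 (n : ℕ) (hn : 0 < n) (q : MvPolynomial (Fin n) ℝ)
    (hq : q.IsHomogeneous n) (hcoeff : ∀ m, 0 ≤ q.coeff m)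
    (α : Fin n → ℝ) (hα : ∀ i, 0 < α i) (hpos : 0 < eval α q)
    (hds : ∑ i, (α i * eval α (pderiv i q) / eval α q - 1) ^ 2 ≤ 1 / (n : ℝ)) :
    ∀ S : Finset (Fin n), ∃ r ∈ q.support, (S.card : ℕ) ≤ ∑ i ∈ S, r i :=
  stmt0_general n q hq hcoeff α hα hpos hds
end

section
/- For any homogeneous polynomial p of degree n in n variables (over ℝ or ℂ), the mixed partial derivative ∂ⁿp/∂x₁···∂xₙ equals 2^{-(n-1)} ∑_{b₂,...,bₙ ∈ {−1,+1}} p(1, b₂, ..., bₙ) · ∏_{i=2}^{n} bᵢ. -/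
/-!
Expanding `p` into monomials, the sum of `p(b) * ∏ bᵢ` over the whole cube `{±1}ⁿ` gives each
monomial `x^d` the weight `∏ᵢ (1 + (-1)^(dᵢ + 1))`, which vanishes unless every `dᵢ` is odd; as
`∑ dᵢ = n`, that forces `d = (1, …, 1)`, so the cube sum is `2ⁿ` times the wanted coefficient.
Homogeneity of degree `n` makes the summand invariant under `b ↦ -b`, so the sum over the half
cube `b₁ = 1` is half of the cube sum.
-/

open MvPolynomial Finset

theorem MvPolynomial.IsHomogeneous.eval_smul {σ R : Type*} [CommSemiring R]
    {p : MvPolynomial σ R} {n : ℕ} (hp : p.IsHomogeneous n) (c : R) (x : σ → R) :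
    eval (c • x) p = c ^ n * eval x p := by
  rw [eval_eq, eval_eq, mul_sum]
  refine sum_congr rfl fun d hd => ?_
  simp only [Pi.smul_apply, smul_eq_mul, mul_pow, prod_mul_distrib, prod_pow_eq_pow_sum,
    ← hp.degree_eq_sum_deg_support hd]
  ring

theorem Fintype.sum_eq_two_nsmul_sum_filter_apply_eq_true {ι M : Type*} [Fintype ι]
    [DecidableEq ι] [AddCommMonoid M] {G : (ι → Bool) → M}
    (hG : ∀ b, G (fun i => !b i) = G b) (z : ι) :
    ∑ b, G b = 2 • ∑ b ∈ univ.filter (fun b : ι → Bool => b z = true), G b := by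
  rw [← sum_filter_add_sum_filter_not univ (fun b : ι → Bool => b z = true), two_nsmul]
  congr 1
  refine sum_nbij' (fun b i => !b i) (fun b i => !b i) ?_ ?_ ?_ ?_ fun b _ => (hG b).symm <;>
    simp

theorem Nat.eq_one_of_forall_odd_of_sum_eq_card {ι : Type*} [Fintype ι] {m : ι → ℕ}
    (hodd : ∀ i, Odd (m i)) (hsum : ∑ i, m i = Fintype.card ι) : m = 1 := by
  have hpos : ∀ i ∈ univ, 1 ≤ m i := fun i _ => (hodd i).pos
  funext i
  refine ((sum_eq_sum_iff_of_le hpos).1 ?_ i (mem_univ i)).symm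
  simpa using hsum.symm

def signVector {ι R : Type*} [Ring R] (b : ι → Bool) : ι → R := fun i => if b i then 1 else -1

theorem signVector_not {ι R : Type*} [Ring R] (b : ι → Bool) :
    (signVector (fun i => !b i) : ι → R) = (-1 : R) • signVector b := by
  funext i
  cases h : b i <;> simp [signVector, h]

theorem MvPolynomial.IsHomogeneous.eval_signVector_not_mul_prod {ι R : Type*} [Fintype ι]
    [CommRing R] {p : MvPolynomial ι R} (hp : p.IsHomogeneous (Fintype.card ι))
    (b : ι → Bool) :
    eval (signVector fun i => !b i) p * ∏ i, signVector (R := R) (fun i => !b i) i =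
      eval (signVector b) p * ∏ i, signVector b i := by
  rw [signVector_not, hp.eval_smul]
  simp only [Pi.smul_apply, smul_eq_mul, neg_one_mul, prod_neg, card_univ]
  rw [mul_mul_mul_comm, ← mul_pow]
  simp

section SignCube

variable {ι R : Type*} [Fintype ι] [DecidableEq ι] [CommRing R]

theorem sum_prod_signVector_pow (e : ι → ℕ) :
    ∑ b : ι → Bool, ∏ i, signVector b i ^ e i = ∏ i, (1 + (-1 : R) ^ e i) := by
  simp only [signVector]
  rw [← Fintype.prod_sum fun i (x : Bool) => (if x then (1 : R) else -1) ^ e i]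
  simp

theorem sum_prod_signVector_pow_mul_prod_signVector {m : ι → ℕ}
    (hm : ∑ i, m i = Fintype.card ι) :
    ∑ b : ι → Bool, (∏ i, signVector b i ^ m i) * ∏ i, signVector b i =
      if m = 1 then (2 : R) ^ Fintype.card ι else 0 := by
  simp_rw [← prod_mul_distrib, ← pow_succ, sum_prod_signVector_pow]
  split_ifs with h
  · simp only [h, Pi.one_apply, prod_const, card_univ]
    norm_num
  · obtain ⟨i, hi⟩ : ∃ i, Even (m i) := by
      by_contra! hodd
      exact h (Nat.eq_one_of_forall_odd_of_sum_eq_card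
        (fun i => Nat.not_even_iff_odd.1 (hodd i)) hm)
    exact prod_eq_zero (mem_univ i) (by simp [hi.add_one.neg_one_pow])

theorem MvPolynomial.IsHomogeneous.sum_eval_signVector_mul_prod_signVector
    {p : MvPolynomial ι R} (hp : p.IsHomogeneous (Fintype.card ι)) :
    ∑ b : ι → Bool, eval (signVector b) p * ∏ i, signVector b i =
      2 ^ Fintype.card ι * p.coeff (Finsupp.equivFunOnFinite.symm 1) := by
  have hdeg : ∀ d ∈ p.support, ∑ i, d i = Fintype.card ι := fun d hd =>
    ((hp.degree_eq_sum_deg_support hd).trans d.degree_eq_sum).symm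
  have hone (d : ι →₀ ℕ) : ⇑d = 1 ↔ d = Finsupp.equivFunOnFinite.symm 1 := by
    rw [Equiv.eq_symm_apply]
    rfl
  simp_rw [eval_eq', sum_mul, mul_assoc]
  rw [sum_comm]
  simp_rw [← mul_sum]
  rw [sum_congr rfl fun d hd => by rw [sum_prod_signVector_pow_mul_prod_signVector (hdeg d hd)]]
  simp_rw [hone, mul_ite, mul_zero]
  rw [sum_ite_eq']
  split_ifs with h
  · ring
  · rw [notMem_support_iff.1 h, mul_zero]

end SignCube

theorem stmt1 (n : ℕ) (hn : 0 < n) (p : MvPolynomial (Fin n) ℝ)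
    (hp : p.IsHomogeneous n) :
    p.coeff (Finsupp.equivFunOnFinite.symm fun _ => 1) =
      (1 / 2 ^ (n - 1) : ℝ) *
        ∑ b ∈ Finset.univ.filter (fun b : Fin n → Bool => b ⟨0, hn⟩ = true),
          eval (fun i => if b i then (1 : ℝ) else -1) p *
            ∏ i ∈ Finset.univ.erase ⟨0, hn⟩, (if b i then (1 : ℝ) else -1) := by
  replace hp : p.IsHomogeneous (Fintype.card (Fin n)) := by rwa [Fintype.card_fin]
  have hslice : ∀ b ∈ univ.filter (fun b : Fin n → Bool => b ⟨0, hn⟩ = true),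
      eval (fun i => if b i then (1 : ℝ) else -1) p *
          ∏ i ∈ univ.erase ⟨0, hn⟩, (if b i then (1 : ℝ) else -1) =
        eval (signVector b) p * ∏ i, signVector b i := fun b hb =>
    congrArg (eval (signVector b) p * ·) (prod_erase _ (by simp [(mem_filter.1 hb).2]))
  have hcube := hp.sum_eval_signVector_mul_prod_signVector
  rw [Fintype.sum_eq_two_nsmul_sum_filter_apply_eq_true hp.eval_signVector_not_mul_prod ⟨0, hn⟩,
    two_nsmul, Fintype.card_fin,
    show (2 : ℝ) ^ n = 2 * 2 ^ (n - 1) by rw [← pow_succ']; congr; omega] at hcube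
  rw [sum_congr rfl hslice]
  change coeff (Finsupp.equivFunOnFinite.symm 1) p = _
  field_simp
  linarith
end

section
/- For any homogeneous polynomial p of degree n in n variables, ∂ⁿp/∂x₁···∂xₙ = 2^{-n} ∑_{b₁,...,bₙ ∈ {−1,+1}} p(b₁, ..., bₙ) · ∏_{i=1}^{n} bᵢ (the polarization formula). -/
/-! Expanding `p` into monomials, the signed sum of `x ^ d` over the cube `{±1}ⁿ` factors as
`∏ i, ((-1) ^ (d i + 1) + 1)`, which is `2 ^ n` when every exponent `d i` is odd and `0` otherwise.
A monomial of total degree at most `n` in `n` variables with all exponents odd is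
`x₁ ⋯ xₙ`, so only its coefficient survives. -/

open MvPolynomial Finset

def boolSign (R : Type*) [Ring R] (t : Bool) : R := if t then 1 else -1

section CommRing

variable {R : Type*} [CommRing R]

theorem sum_boolSign_pow (k : ℕ) :
    ∑ t : Bool, boolSign R t ^ k = if Even k then 2 else 0 := by
  rcases Nat.even_or_odd k with hk | hk
  · simp [boolSign, hk, hk.neg_one_pow, one_add_one_eq_two]
  · simp [boolSign, hk.neg_one_pow, Nat.not_even_iff_odd.mpr hk]

variable {σ : Type*} [Fintype σ] [DecidableEq σ]

theorem sum_prod_boolSign_pow (e : σ → ℕ) :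
    ∑ b : σ → Bool, ∏ i, boolSign R (b i) ^ e i =
      if ∀ i, Even (e i) then 2 ^ Fintype.card σ else 0 := by
  rw [← Fintype.prod_sum fun i t => boolSign R t ^ e i]
  simp_rw [sum_boolSign_pow]
  split_ifs with h
  · simp [h]
  · obtain ⟨i, hi⟩ := not_forall.mp h
    exact prod_eq_zero (mem_univ i) (if_neg hi)

theorem sum_eval_boolSign_mul_prod_boolSign (p : MvPolynomial σ R) :
    ∑ b : σ → Bool, eval (fun i => boolSign R (b i)) p * ∏ i, boolSign R (b i) =
      ∑ d ∈ p.support with ∀ i, Odd (d i), p.coeff d * 2 ^ Fintype.card σ := by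
  simp_rw [eval_eq', sum_mul]
  rw [sum_comm, sum_filter]
  refine sum_congr rfl fun d _ => ?_
  simp_rw [mul_assoc, ← prod_mul_distrib, ← pow_succ, ← mul_sum, sum_prod_boolSign_pow,
    Nat.even_add_one, Nat.not_even_iff_odd]
  split_ifs <;> simp

end CommRing

theorem Finsupp.eq_one_of_forall_odd_of_degree_le {σ : Type*} [Fintype σ] {d : σ →₀ ℕ}
    (hodd : ∀ i, Odd (d i)) (hdeg : d.degree ≤ Fintype.card σ) :
    d = Finsupp.equivFunOnFinite.symm fun _ => 1 := by
  have hle : ∀ i ∈ univ, 1 ≤ d i := fun i _ => (hodd i).pos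
  have hsum : ∑ _i : σ, 1 = ∑ i, d i :=
    le_antisymm (Finset.sum_le_sum hle) (by simpa [← Finsupp.degree_eq_sum] using hdeg)
  ext i
  exact ((sum_eq_sum_iff_of_le hle).mp hsum i (mem_univ i)).symm

theorem coeff_one_mul_two_pow_eq_sum_eval_boolSign {R σ : Type*} [CommRing R] [Fintype σ]
    [DecidableEq σ] (p : MvPolynomial σ R) (hp : p.totalDegree ≤ Fintype.card σ) :
    p.coeff (Finsupp.equivFunOnFinite.symm fun _ => 1) * 2 ^ Fintype.card σ =
      ∑ b : σ → Bool, eval (fun i => boolSign R (b i)) p * ∏ i, boolSign R (b i) := by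
  rw [sum_eval_boolSign_mul_prod_boolSign, eq_comm]
  refine sum_eq_single _ (fun d hd hne => ?_) fun hone => ?_
  · rw [mem_filter] at hd
    exact absurd (Finsupp.eq_one_of_forall_odd_of_degree_le hd.2
      ((le_totalDegree hd.1).trans hp)) hne
  · rw [notMem_support_iff.mp fun h => hone (mem_filter.mpr ⟨h, fun _ => odd_one⟩), zero_mul]

theorem stmt2 (n : ℕ) (p : MvPolynomial (Fin n) ℝ) (hp : p.IsHomogeneous n) :
    p.coeff (Finsupp.equivFunOnFinite.symm fun _ => 1) =
      (1 / 2 ^ n : ℝ) *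
        ∑ b : Fin n → Bool,
          eval (fun i => if b i then (1 : ℝ) else -1) p *
            ∏ i, (if b i then (1 : ℝ) else -1) := by
  have key := coeff_one_mul_two_pow_eq_sum_eval_boolSign p
    (by simpa using hp.totalDegree_le)
  simp only [boolSign, Fintype.card_fin] at key
  rw [← key]
  field_simp
end

section
/- Let z₁,...,zₙ be independent complex random variables with E(zᵢ) = 0 and E(zᵢ·conj(zᵢ)) = 1 for each i. Then for any homogeneous polynomial p of degree n in n complex variables, ∂ⁿp/∂x₁···∂xₙ = E(p(z₁,...,zₙ) · ∏ᵢ conj(zᵢ)). -/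
open MvPolynomial MeasureTheory ProbabilityTheory Finset ComplexConjugate

/-!
Expand `p` into monomials `c_d x^d`. By independence, `E[z^d ∏ conj zᵢ] = ∏ E[zᵢ^{dᵢ} conj zᵢ]`.
A monomial of degree `n` in `n` variables other than `x₁⋯xₙ` misses some variable `xᵢ`, and then
its factor `E[conj zᵢ] = conj E[zᵢ]` vanishes; the monomial `x₁⋯xₙ` contributes `∏ E|zᵢ|² = 1`.
-/

theorem ProbabilityTheory.iIndepFun.integrable_fun_prod {Ω ι 𝕜 : Type*} [MeasurableSpace Ω]
    {μ : Measure Ω} [Fintype ι] [RCLike 𝕜] {X : ι → Ω → 𝕜} (hX : iIndepFun X μ)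
    (mX : ∀ i, Measurable (X i)) (iX : ∀ i, Integrable (X i) μ) :
    Integrable (fun ω => ∏ i, X i ω) μ := by
  refine ⟨Finset.aestronglyMeasurable_fun_prod _ fun i _ => (mX i).aestronglyMeasurable, ?_⟩
  have hnorm : iIndepFun (fun i ω => ‖X i ω‖ₑ) μ := hX.comp (fun _ x => ‖x‖ₑ) fun _ => by fun_prop
  calc ∫⁻ ω, ‖∏ i, X i ω‖ₑ ∂μ = ∫⁻ ω, ∏ i, ‖X i ω‖ₑ ∂μ := by
        simp only [enorm_eq_nnnorm, nnnorm_prod, ENNReal.ofNNReal_finsetProd]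
    _ = ∏ i, ∫⁻ ω, ‖X i ω‖ₑ ∂μ :=
      lintegral_prod_eq_prod_lintegral_of_indepFun _ _ hnorm fun i => (mX i).enorm
    _ < ⊤ := ENNReal.prod_lt_top fun i _ => (iX i).2

theorem Finsupp.exists_eq_zero_of_degree_eq_card {σ : Type*} [Fintype σ] {d : σ →₀ ℕ}
    (hd : d.degree = Fintype.card σ) (hne : d ≠ Finsupp.equivFunOnFinite.symm fun _ => 1) :
    ∃ i, d i = 0 := by
  by_contra! hpos
  refine hne (Finsupp.ext fun i => ?_)
  have hsum : ∑ _i : σ, 1 = ∑ i, d i := by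
    rw [← Finsupp.degree_eq_sum, hd, Fintype.card_eq_sum_ones]
  exact ((Finset.sum_eq_sum_iff_of_le fun i _ => Nat.one_le_iff_ne_zero.2 (hpos i)).1 hsum i
    (mem_univ i)).symm

theorem integral_eval_mul_prod_conj {σ Ω : Type*} [Fintype σ] [MeasurableSpace Ω]
    {μ : Measure Ω} (p : MvPolynomial σ ℂ) {z : σ → Ω → ℂ} (hmeas : ∀ i, Measurable (z i))
    (hindep : iIndepFun z μ)
    (hint : ∀ d ∈ p.support, ∀ i, Integrable (fun ω => z i ω ^ d i * conj (z i ω)) μ) :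
    ∫ ω, eval (fun i => z i ω) p * ∏ i, conj (z i ω) ∂μ =
      ∑ d ∈ p.support, p.coeff d * ∏ i, ∫ ω, z i ω ^ d i * conj (z i ω) ∂μ := by
  have hexpand : ∀ ω, eval (fun i => z i ω) p * ∏ i, conj (z i ω) =
      ∑ d ∈ p.support, p.coeff d * ∏ i, (z i ω ^ d i * conj (z i ω)) := fun ω => by
    rw [eval_eq', sum_mul]
    exact sum_congr rfl fun d _ => by rw [mul_assoc, ← prod_mul_distrib]
  have hint_prod : ∀ d ∈ p.support,
      Integrable (fun ω => ∏ i, (z i ω ^ d i * conj (z i ω))) μ := fun d hd =>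
    (hindep.comp (fun i w => w ^ d i * conj w) fun _ => by fun_prop).integrable_fun_prod
      (fun i => by fun_prop) (hint d hd)
  simp_rw [hexpand]
  rw [integral_finsetSum _ fun d hd => (hint_prod d hd).const_mul _]
  refine sum_congr rfl fun d _ => ?_
  rw [integral_const_mul, hindep.integral_fun_prod_comp (f := fun i w => w ^ d i * conj w)
    (fun i => (hmeas i).aemeasurable) fun _ => by fun_prop]

theorem stmt3_general (n : ℕ) {Ω : Type*} [MeasurableSpace Ω] (μ : Measure Ω)
    (p : MvPolynomial (Fin n) ℂ) (hp : p.IsHomogeneous n)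
    (z : Fin n → Ω → ℂ) (hmeas : ∀ i, Measurable (z i))
    (hindep : iIndepFun z μ)
    (hint : ∀ (i : Fin n) (k : ℕ), k ≤ n →
      Integrable (fun ω => z i ω ^ k * (starRingEnd ℂ) (z i ω)) μ)
    (hmean : ∀ i, ∫ ω, z i ω ∂μ = 0)
    (hvar : ∀ i, ∫ ω, z i ω * (starRingEnd ℂ) (z i ω) ∂μ = 1) :
    p.coeff (Finsupp.equivFunOnFinite.symm fun _ => 1) =
      ∫ ω, eval (fun i => z i ω) p * ∏ i, (starRingEnd ℂ) (z i ω) ∂μ := by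
  set T : Fin n →₀ ℕ := Finsupp.equivFunOnFinite.symm fun _ => 1
  have hdeg : ∀ d ∈ p.support, d.degree = n := fun d hd =>
    (DFunLike.congr_fun Finsupp.degree_eq_weight_one d).trans (hp (mem_support_iff.1 hd))
  rw [integral_eval_mul_prod_conj p hmeas hindep fun d hd i =>
    hint i (d i) ((Finsupp.le_degree i d).trans_eq (hdeg d hd))]
  have hprod_T : ∏ i, ∫ ω, z i ω ^ T i * conj (z i ω) ∂μ = 1 := by
    simp [T, hvar]
  rw [sum_eq_single T (fun d hd hne => ?_) fun hT => by simp [notMem_support_iff.1 hT], hprod_T,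
    mul_one]
  obtain ⟨i, hi⟩ :=
    Finsupp.exists_eq_zero_of_degree_eq_card ((hdeg d hd).trans (Fintype.card_fin n).symm) hne
  rw [prod_eq_zero (mem_univ i) (by simp [hi, integral_conj, hmean]), mul_zero]

theorem stmt3 (n : ℕ) {Ω : Type*} [MeasurableSpace Ω] (μ : Measure Ω)
    [IsProbabilityMeasure μ] (p : MvPolynomial (Fin n) ℂ) (hp : p.IsHomogeneous n)
    (z : Fin n → Ω → ℂ) (hmeas : ∀ i, Measurable (z i))
    (hindep : iIndepFun z μ)
    (hint0 : ∀ i, Integrable (z i) μ)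
    (hint : ∀ (i : Fin n) (k : ℕ), k ≤ n →
      Integrable (fun ω => z i ω ^ k * (starRingEnd ℂ) (z i ω)) μ)
    (hint2 : Integrable (fun ω => eval (fun i => z i ω) p * ∏ i, (starRingEnd ℂ) (z i ω)) μ)
    (hmean : ∀ i, ∫ ω, z i ω ∂μ = 0)
    (hvar : ∀ i, ∫ ω, z i ω * (starRingEnd ℂ) (z i ω) ∂μ = 1) :
    p.coeff (Finsupp.equivFunOnFinite.symm fun _ => 1) =
      ∫ ω, eval (fun i => z i ω) p * ∏ i, (starRingEnd ℂ) (z i ω) ∂μ :=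
  stmt3_general n μ p hp z hmeas hindep hint hmean hvar
end

section
/- Let q(x₁,...,xₙ) be a homogeneous polynomial of degree n with nonnegative coefficients. Then the all-ones vector (1,...,1) lies in the convex hull of supp(q) if and only if inf over all real vectors (y₁,...,yₙ) with y₁+...+yₙ = 0 of log q(e^{y₁},...,e^{yₙ}) is greater than −∞. -/
/-!
Write `q(e^y) = ∑_d c_d e^{⟨d, y⟩}` over the support. Each term gives
`⟨d, y⟩ ≤ log q(e^y) - m` with `m = min_d log c_d`, and the vectors `z` with
`⟨z, y⟩ ≤ log q(e^y) - m` form a half-space, so the bound holds on the whole convex hull; at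
`z = 1` and `∑ y_i = 0` it is a lower bound for `log q(e^y)`.

Conversely, if `1` is not in the hull, a separating hyperplane, shifted to be orthogonal to `1`
(possible since every exponent has coordinate sum `n`), gives `y` with `∑ y_i = 0` and
`⟨d, y⟩ < 0` on the support; then `log q(e^{t y}) → -∞` as `t → ∞`.
-/

open MvPolynomial Filter Topology

section SeparationByDotProduct

variable {σ : Type*} [Fintype σ]

theorem exists_dotProduct_lt_of_notMem {s : Set (σ → ℝ)} {x : σ → ℝ} (hs : Convex ℝ s)
    (hs_closed : IsClosed s) (hx : x ∉ s) : ∃ y : σ → ℝ, ∀ z ∈ s, z ⬝ᵥ y < x ⬝ᵥ y := by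
  classical
  obtain ⟨f, u, hfs, hfx⟩ := geometric_hahn_banach_closed_point hs hs_closed hx
  have hf : ∀ z, f z = z ⬝ᵥ fun i => f fun j => if i = j then 1 else 0 := fun z => by
    simpa [dotProduct] using (f : (σ → ℝ) →ₗ[ℝ] ℝ).pi_apply_eq_sum_univ z
  exact ⟨_, fun z hz => by rw [← hf z, ← hf x]; exact (hfs z hz).trans hfx⟩

/-- Subtracting its mean from a separating direction keeps it separating, because all points of
`S` have the same coordinate sum as `x`. -/
theorem exists_sum_eq_zero_dotProduct_lt_of_notMem_convexHull {S : Set (σ → ℝ)} {x : σ → ℝ}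
    (hS : S.Finite) (hS_sum : ∀ z ∈ S, ∑ i, z i = ∑ i, x i) (hx : x ∉ convexHull ℝ S) :
    ∃ y : σ → ℝ, ∑ i, y i = 0 ∧ ∀ z ∈ S, z ⬝ᵥ y < x ⬝ᵥ y := by
  obtain ⟨y, hy⟩ := exists_dotProduct_lt_of_notMem (convex_convexHull ℝ S)
    (hS.isClosed_convexHull ℝ) hx
  set c := (∑ i, y i) / Fintype.card σ
  refine ⟨y - c • 1, ?_, fun z hz => ?_⟩
  · rcases isEmpty_or_nonempty σ with hσ | hσ
    · simp
    · have hcard : (Fintype.card σ : ℝ) ≠ 0 := Nat.cast_ne_zero.mpr Fintype.card_ne_zero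
      simp [Finset.sum_sub_distrib, c, Finset.card_univ, mul_div_cancel₀ _ hcard]
  · have hxz := hy z (subset_convexHull ℝ S hz)
    simp only [dotProduct_sub, dotProduct_smul, dotProduct_one, hS_sum z hz, smul_eq_mul]
    linarith

end SeparationByDotProduct

section ExpEval

variable {σ : Type*} [Fintype σ] {p : MvPolynomial σ ℝ}

theorem eval_exp_eq_sum (p : MvPolynomial σ ℝ) (y : σ → ℝ) :
    eval (fun i => Real.exp (y i)) p =
      ∑ d ∈ p.support, p.coeff d * Real.exp ((fun i => (d i : ℝ)) ⬝ᵥ y) := by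
  rw [eval_eq']
  refine Finset.sum_congr rfl fun d _ => ?_
  simp only [dotProduct, Real.exp_sum, ← Real.exp_nat_mul]

theorem eval_exp_pos (hcoeff : ∀ m, 0 ≤ p.coeff m) (hp : p ≠ 0) (y : σ → ℝ) :
    0 < eval (fun i => Real.exp (y i)) p := by
  rw [eval_exp_eq_sum]
  refine Finset.sum_pos (fun d hd => mul_pos ?_ (Real.exp_pos _)) (support_nonempty.mpr hp)
  exact (hcoeff d).lt_of_ne' (mem_support_iff.mp hd)

theorem log_coeff_add_dotProduct_le_log_eval_exp (hcoeff : ∀ m, 0 ≤ p.coeff m)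
    {d : σ →₀ ℕ} (hd : d ∈ p.support) (y : σ → ℝ) :
    Real.log (p.coeff d) + (fun i => (d i : ℝ)) ⬝ᵥ y ≤
      Real.log (eval (fun i => Real.exp (y i)) p) := by
  have hd_pos : 0 < p.coeff d := (hcoeff d).lt_of_ne' (mem_support_iff.mp hd)
  have hterm : p.coeff d * Real.exp ((fun i => (d i : ℝ)) ⬝ᵥ y) ≤
      eval (fun i => Real.exp (y i)) p := by
    rw [eval_exp_eq_sum]
    exact Finset.single_le_sum (f := fun d => p.coeff d * Real.exp ((fun i => (d i : ℝ)) ⬝ᵥ y))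
      (fun e _ => mul_nonneg (hcoeff e) (Real.exp_pos _).le) hd
  rw [← Real.log_exp ((fun i => (d i : ℝ)) ⬝ᵥ y), ← Real.log_mul hd_pos.ne' (Real.exp_pos _).ne']
  exact Real.log_le_log (mul_pos hd_pos (Real.exp_pos _)) hterm

theorem exists_add_dotProduct_le_log_eval_exp (hcoeff : ∀ m, 0 ≤ p.coeff m) {x : σ → ℝ}
    (hx : x ∈ convexHull ℝ ((fun (r : σ →₀ ℕ) (i : σ) => (r i : ℝ)) '' ↑p.support)) :
    ∃ L : ℝ, ∀ y : σ → ℝ, L + x ⬝ᵥ y ≤ Real.log (eval (fun i => Real.exp (y i)) p) := by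
  obtain ⟨m, hm⟩ := ((p.support.image fun d => Real.log (p.coeff d)) : Set ℝ).toFinite.bddBelow
  refine ⟨m, fun y => ?_⟩
  have hhull : convexHull ℝ ((fun (r : σ →₀ ℕ) (i : σ) => (r i : ℝ)) '' ↑p.support) ⊆
      {z | z ⬝ᵥ y ≤ Real.log (eval (fun i => Real.exp (y i)) p) - m} := by
    refine convexHull_min ?_ (convex_halfSpace_le ((dotProductBilin ℝ ℝ).flip y).isLinear _)
    rintro _ ⟨d, hd, rfl⟩
    have hmd : m ≤ Real.log (p.coeff d) := hm (Finset.mem_coe.mpr (Finset.mem_image_of_mem _ hd))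
    have := log_coeff_add_dotProduct_le_log_eval_exp hcoeff hd y
    simp only [Set.mem_ofPred_eq]
    linarith
  have := hhull hx
  simp only [Set.mem_ofPred_eq] at this
  linarith

theorem tendsto_log_eval_exp_smul_atBot (hcoeff : ∀ m, 0 ≤ p.coeff m) (hp : p ≠ 0) {y : σ → ℝ}
    (hy : ∀ d ∈ p.support, (fun i => (d i : ℝ)) ⬝ᵥ y < 0) :
    Tendsto (fun t : ℝ => Real.log (eval (fun i => Real.exp ((t • y) i)) p)) atTop atBot := by
  have hterm : ∀ d ∈ p.support,
      Tendsto (fun t : ℝ => p.coeff d * Real.exp ((fun i => (d i : ℝ)) ⬝ᵥ (t • y))) atTop (𝓝 0) := by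
    intro d hd
    simp only [dotProduct_smul, smul_eq_mul]
    simpa using ((Real.tendsto_exp_atBot.comp
      (tendsto_id.atTop_mul_const_of_neg (hy d hd))).const_mul (p.coeff d))
  have hsum : Tendsto (fun t : ℝ => eval (fun i => Real.exp ((t • y) i)) p) atTop (𝓝[>] 0) := by
    refine tendsto_nhdsWithin_iff.mpr ⟨?_, Eventually.of_forall fun t => eval_exp_pos hcoeff hp _⟩
    simp only [eval_exp_eq_sum]
    simpa using tendsto_finsetSum p.support hterm
  exact Real.tendsto_log_nhdsGT_zero.comp hsum

end ExpEval

theorem stmt7 (n : ℕ) (q : MvPolynomial (Fin n) ℝ) (hq : q.IsHomogeneous n)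
    (hcoeff : ∀ m, 0 ≤ q.coeff m) (hq0 : q ≠ 0) :
    ((fun _ => (1 : ℝ)) ∈
        convexHull ℝ ((fun (r : Fin n →₀ ℕ) (i : Fin n) => (r i : ℝ)) '' ↑q.support)) ↔
      ∃ L : ℝ, ∀ y : Fin n → ℝ, ∑ i, y i = 0 →
        L ≤ Real.log (eval (fun i => Real.exp (y i)) q) := by
  constructor
  · intro hone
    obtain ⟨L, hL⟩ := exists_add_dotProduct_le_log_eval_exp hcoeff hone
    refine ⟨L, fun y hy => ?_⟩
    simpa [← Pi.one_def, one_dotProduct, hy] using hL y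
  · rintro ⟨L, hL⟩
    by_contra hone
    have hS_sum : ∀ z ∈ (fun (r : Fin n →₀ ℕ) (i : Fin n) => (r i : ℝ)) '' ↑q.support,
        ∑ i, z i = ∑ _ : Fin n, (1 : ℝ) := by
      rintro _ ⟨d, hd, rfl⟩
      have hdeg := hq.degree_eq_sum_deg_support hd
      rw [← Finsupp.degree_apply, Finsupp.degree_eq_sum] at hdeg
      simp [← Nat.cast_sum, ← hdeg]
    obtain ⟨y, hy_sum, hy⟩ := exists_sum_eq_zero_dotProduct_lt_of_notMem_convexHull
      (q.support.finite_toSet.image _) hS_sum hone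
    have hy_neg : ∀ d ∈ q.support, (fun i => (d i : ℝ)) ⬝ᵥ y < 0 := fun d hd => by
      simpa [← Pi.one_def, one_dotProduct, hy_sum] using hy _ ⟨d, hd, rfl⟩
    obtain ⟨t, ht⟩ :=
      ((tendsto_log_eval_exp_smul_atBot hcoeff hq0 hy_neg).eventually_lt_atBot L).exists
    exact ht.not_ge (hL (t • y) (by simp [← Finset.mul_sum, hy_sum]))
end

section
/- Let R be a homogeneous polynomial in n complex variables with real coefficients such that for every real vector x with positive coordinates, R is hyperbolic in direction x (i.e., for all real y, all roots t of R(y − t·x) = 0 are real), and R(x) > 0 for positive vectors x. Then R has the half-plane property: R(z₁,...,zₙ) ≠ 0 whenever Re(zᵢ) > 0 for all i. Moreover |R(x₁+iy₁,...,xₙ+iyₙ)| ≥ R(x₁,...,xₙ) for all real x with positive coordinates and all real y. -/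
/-!
For `x > 0` and real `y`, homogeneity gives `R(x + t y) = t^d R(y + x/t)`, so hyperbolicity in direction
`x` makes every root `λ` of the univariate polynomial `p(t) = R(x + t y)` real. For real `λ` we have
`|i - λ| ≥ |λ|`, so factoring `p` over its roots yields `|R(x + i y)| = |p(i)| ≥ |p(0)| = |R(x)|`.
Finally `R(x + i y) = i^d R(y - i x)` cannot vanish, since `i` is not real.
-/

open MvPolynomial

namespace Polynomial

theorem norm_eval_le_norm_eval_of_forall_mem_roots {K : Type*} [NormedField K] [IsAlgClosed K]
    (p : K[X]) {a b : K} (h : ∀ l ∈ p.roots, ‖a - l‖ ≤ ‖b - l‖) : ‖p.eval a‖ ≤ ‖p.eval b‖ := by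
  have hsplit := IsAlgClosed.splits p
  have hnorm : ∀ s : Multiset K, ‖s.prod‖ = (s.map (‖·‖)).prod := map_multiset_prod normHom
  rw [hsplit.eval_eq_prod_roots, hsplit.eval_eq_prod_roots, norm_mul, norm_mul, hnorm, hnorm,
    Multiset.map_map, Multiset.map_map]
  gcongr
  exact Multiset.prod_map_le_prod_map₀ _ _ (fun _ _ => norm_nonneg _) h

end Polynomial

namespace MvPolynomial

theorem IsHomogeneous.eval_mul_left {R σ : Type*} [CommSemiring R] {φ : MvPolynomial σ R} {d : ℕ}
    (hφ : φ.IsHomogeneous d) (c : R) (z : σ → R) :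
    eval (fun i => c * z i) φ = c ^ d * eval z φ := by
  rw [eval_eq, eval_eq, Finset.mul_sum]
  refine Finset.sum_congr rfl fun m hm => ?_
  have hdeg : ∑ i ∈ m.support, m i = d := by
    rw [← hφ (mem_support_iff.mp hm)]
    simp [Finsupp.weight_apply, Finsupp.sum]
  simp only [mul_pow, Finset.prod_mul_distrib, Finset.prod_pow_eq_pow_sum, hdeg]
  ring

variable {σ : Type*}

/-- Hyperbolicity in direction `x`, without the requirement `R(x) ≠ 0`. -/
def IsRealRootedInDirection (R : MvPolynomial σ ℂ) (x : σ → ℝ) : Prop :=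
  ∀ y : σ → ℝ, ∀ t : ℂ, eval (fun i => (y i : ℂ) - t * (x i : ℂ)) R = 0 → t.im = 0

namespace IsRealRootedInDirection

variable {R : MvPolynomial σ ℂ} {d : ℕ} {x : σ → ℝ}

theorem eval_ne_zero (hR : R.IsHomogeneous d) {z : σ → ℂ}
    (hz : IsRealRootedInDirection R fun i => (z i).re) : eval z R ≠ 0 := by
  intro hzero
  have hrot : eval (fun i => ((z i).im : ℂ) - Complex.I * ((z i).re : ℂ)) R = 0 := by
    have : (fun i => ((z i).im : ℂ) - Complex.I * ((z i).re : ℂ)) = fun i => -Complex.I * z i := by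
      funext i
      apply Complex.ext <;> simp
    rw [this, hR.eval_mul_left, hzero, mul_zero]
  simpa using hz (fun i => (z i).im) Complex.I hrot

theorem im_eq_zero_of_eval_add_mul_eq_zero (hR : R.IsHomogeneous d)
    (hx : IsRealRootedInDirection R x) (y : σ → ℝ) {l : ℂ}
    (hl : eval (fun i => (x i : ℂ) + (y i : ℂ) * l) R = 0) : l.im = 0 := by
  rcases eq_or_ne l 0 with rfl | hl0
  · rfl
  have hscaled : eval (fun i => l * ((y i : ℂ) - -l⁻¹ * (x i : ℂ))) R = 0 := by
    convert hl using 3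
    funext i
    rw [mul_sub, neg_mul, mul_neg, mul_inv_cancel_left₀ hl0, sub_neg_eq_add, add_comm, mul_comm]
  rw [hR.eval_mul_left, mul_eq_zero] at hscaled
  have hinv : (l⁻¹).im = 0 := by
    simpa using hx y _ (hscaled.resolve_left (pow_ne_zero d hl0))
  rw [Complex.inv_im, div_eq_zero_iff, neg_eq_zero] at hinv
  exact hinv.resolve_right (Complex.normSq_pos.mpr hl0).ne'

theorem norm_eval_le_norm_eval_add_mul_I (hR : R.IsHomogeneous d)
    (hx : IsRealRootedInDirection R x) (y : σ → ℝ) :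
    ‖eval (fun i => (x i : ℂ)) R‖ ≤ ‖eval (fun i => (x i : ℂ) + (y i : ℂ) * Complex.I) R‖ := by
  set p : Polynomial ℂ :=
    aeval (fun i => Polynomial.C (x i : ℂ) + Polynomial.C (y i : ℂ) * Polynomial.X) R
  have hp : ∀ t : ℂ, p.eval t = eval (fun i => (x i : ℂ) + (y i : ℂ) * t) R := by
    intro t
    rw [← Polynomial.coe_aeval_eq_eval, ← AlgHom.comp_apply, comp_aeval, ← coe_aeval_eq_eval]
    simp
  have hroots : ∀ l ∈ p.roots, ‖0 - l‖ ≤ ‖Complex.I - l‖ := by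
    intro l hl
    have hreal : l.im = 0 :=
      hx.im_eq_zero_of_eval_add_mul_eq_zero hR y (hp l ▸ (Polynomial.mem_roots'.mp hl).2)
    rw [zero_sub, norm_neg, ← Complex.abs_re_eq_norm.mpr hreal]
    simpa using Complex.abs_re_le_norm (Complex.I - l)
  simpa [hp] using p.norm_eval_le_norm_eval_of_forall_mem_roots hroots

end IsRealRootedInDirection

end MvPolynomial

theorem stmt11_general (n d : ℕ) (R : MvPolynomial (Fin n) ℂ) (hR : R.IsHomogeneous d)
    (hhyp : ∀ x : Fin n → ℝ, (∀ i, 0 < x i) → ∀ y : Fin n → ℝ, ∀ t : ℂ,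
      eval (fun i => (y i : ℂ) - t * (x i : ℂ)) R = 0 → t.im = 0) :
    (∀ z : Fin n → ℂ, (∀ i, 0 < (z i).re) → eval z R ≠ 0) ∧
    (∀ x y : Fin n → ℝ, (∀ i, 0 < x i) →
      (eval (fun i => (x i : ℂ)) R).re ≤
        ‖eval (fun i => (x i : ℂ) + (y i : ℂ) * Complex.I) R‖) :=
  ⟨fun _ hz => IsRealRootedInDirection.eval_ne_zero hR (hhyp _ hz),
    fun x y hx => (Complex.re_le_norm _).trans
      (IsRealRootedInDirection.norm_eval_le_norm_eval_add_mul_I hR (hhyp x hx) y)⟩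

theorem stmt11 (n d : ℕ) (R : MvPolynomial (Fin n) ℂ) (hR : R.IsHomogeneous d)
    (hreal : ∀ m, (R.coeff m).im = 0)
    (hhyp : ∀ x : Fin n → ℝ, (∀ i, 0 < x i) → ∀ y : Fin n → ℝ, ∀ t : ℂ,
      eval (fun i => (y i : ℂ) - t * (x i : ℂ)) R = 0 → t.im = 0)
    (hpos : ∀ x : Fin n → ℝ, (∀ i, 0 < x i) → 0 < (eval (fun i => (x i : ℂ)) R).re) :
    (∀ z : Fin n → ℂ, (∀ i, 0 < (z i).re) → eval z R ≠ 0) ∧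
    (∀ x y : Fin n → ℝ, (∀ i, 0 < x i) →
      (eval (fun i => (x i : ℂ)) R).re ≤
        ‖eval (fun i => (x i : ℂ) + (y i : ℂ) * Complex.I) R‖) :=
  stmt11_general n d R hR hhyp
end

section
/- Let R be a homogeneous polynomial of degree n in n complex variables with the half-plane property (R(z) ≠ 0 whenever all Re(zᵢ) > 0). Then for every real vector X ∈ ℝⁿ, all roots of the univariate equation R(X − t·e) = 0 are real, where e = (1,...,1); moreover, if X has positive coordinates, all these roots are positive. -/
/-!
A homogeneous polynomial of degree `k` satisfies `R (c • w) = c ^ k * R w`, so its zero set is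
stable under complex scaling. If `X - t • 1` were a zero with `Im t = y ≠ 0`, scaling it by `I / y`
gives the zero `(I (X i - Re t) / y + 1)ᵢ`, which lies in the open right half-plane. If `X > 0`
and `Re t ≤ 0`, then `X - t • 1` itself already lies there.
-/

open MvPolynomial

namespace MvPolynomial.IsHomogeneous

theorem eval_smul_s12 {σ R : Type*} [CommSemiring R] {φ : MvPolynomial σ R} {k : ℕ}
    (hφ : φ.IsHomogeneous k) (c : R) (z : σ → R) :
    eval (c • z) φ = c ^ k * eval z φ := by
  rw [eval_eq, eval_eq, Finset.mul_sum]
  refine Finset.sum_congr rfl fun d hd => ?_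
  have hdeg : ∑ i ∈ d.support, d i = k := by
    rw [← Finsupp.degree_apply, Finsupp.degree_eq_weight_one]
    exact hφ (mem_support_iff.mp hd)
  simp only [Pi.smul_apply, smul_eq_mul, mul_pow, Finset.prod_mul_distrib,
    Finset.prod_pow_eq_pow_sum, hdeg]
  ring

theorem eval_ne_zero_of_re_smul_pos {σ : Type*} {R : MvPolynomial σ ℂ} {k : ℕ}
    (hR : R.IsHomogeneous k) (hhp : ∀ z : σ → ℂ, (∀ i, 0 < (z i).re) → eval z R ≠ 0)
    {w : σ → ℂ} (c : ℂ) (hc : ∀ i, 0 < (c * w i).re) : eval w R ≠ 0 := by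
  intro hw
  exact hhp (c • w) hc (by rw [hR.eval_smul_s12, hw, mul_zero])

end MvPolynomial.IsHomogeneous

theorem Complex.re_I_div_im_mul_ofReal_sub (x : ℝ) {t : ℂ} (ht : t.im ≠ 0) :
    (Complex.I / t.im * (x - t)).re = 1 := by
  simp only [Complex.mul_re, Complex.div_ofReal_re, Complex.div_ofReal_im, Complex.I_re,
    Complex.I_im, Complex.sub_re, Complex.sub_im, Complex.ofReal_re, Complex.ofReal_im]
  field_simp
  ring

theorem stmt12_general (n : ℕ) (R : MvPolynomial (Fin n) ℂ) (hR : R.IsHomogeneous n)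
    (hhp : ∀ z : Fin n → ℂ, (∀ i, 0 < (z i).re) → eval z R ≠ 0) :
    (∀ X : Fin n → ℝ, ∀ t : ℂ, eval (fun i => (X i : ℂ) - t) R = 0 → t.im = 0) ∧
    (∀ X : Fin n → ℝ, (∀ i, 0 < X i) → ∀ t : ℂ,
      eval (fun i => (X i : ℂ) - t) R = 0 → t.im = 0 ∧ 0 < t.re) := by
  have real_roots : ∀ X : Fin n → ℝ, ∀ t : ℂ,
      eval (fun i => (X i : ℂ) - t) R = 0 → t.im = 0 := by
    intro X t hroot
    by_contra hy
    refine hR.eval_ne_zero_of_re_smul_pos hhp (Complex.I / t.im) (fun i => ?_) hroot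
    rw [Complex.re_I_div_im_mul_ofReal_sub _ hy]
    exact one_pos
  refine ⟨real_roots, fun X hX t hroot => ⟨real_roots X t hroot, ?_⟩⟩
  by_contra! hre
  refine hR.eval_ne_zero_of_re_smul_pos hhp 1 (fun i => ?_) hroot
  simp only [one_mul, Complex.sub_re, Complex.ofReal_re]
  linarith [hX i]

theorem stmt12 (n : ℕ) (R : MvPolynomial (Fin n) ℂ) (hR : R.IsHomogeneous n) (hR0 : R ≠ 0)
    (hhp : ∀ z : Fin n → ℂ, (∀ i, 0 < (z i).re) → eval z R ≠ 0) :
    (∀ X : Fin n → ℝ, ∀ t : ℂ, eval (fun i => (X i : ℂ) - t) R = 0 → t.im = 0) ∧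
    (∀ X : Fin n → ℝ, (∀ i, 0 < X i) → ∀ t : ℂ,
      eval (fun i => (X i : ℂ) - t) R = 0 → t.im = 0 ∧ 0 < t.re) :=
  stmt12_general n R hR hhp
end

section
/- Let A, B, C be n×n positive semidefinite matrices (real symmetric or Hermitian) with B − A positive semidefinite, rank(B) ≥ n−1, rank(A) ≥ l, rank(C) ≥ 1, rank(A+C) ≥ l+1, and rank(B+C) = n, where 0 ≤ l ≤ n−1. Then there exist n linearly independent vectors v₁,...,vₙ with v₁,...,v_l ∈ Im(A), v_{l+1},...,v_{n−1} ∈ Im(B), and vₙ ∈ Im(C). -/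
/-!
In the Loewner order `A ≤ B`, so `ker B ≤ ker A`; as the range of a Hermitian matrix is the
orthogonal complement of its kernel, `Im A ≤ Im B`. Together with `Im (M + N) ≤ Im M ⊔ Im N` this
reduces the claim to subspaces `U ≤ V` and `W ≠ ⊥` with `dim V ≥ n - 1`, `dim U ≥ l`,
`dim (U ⊔ W) ≥ l + 1` and `V ⊔ W = ⊤`. Take `w ∈ W` outside `V` if possible (otherwise `V = ⊤`)
and outside `U` unless `W ≤ U`; then `V ⊔ K ∙ w = ⊤` and `dim (U ⊔ K ∙ w) ≥ l + 1`. Extend `w`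
first by `l` vectors of `U`, then by `n - 1 - l` vectors of `V`, each time lifting a linearly
independent family from the quotient by the span of the vectors already chosen.
-/

open scoped ComplexOrder
open Module Submodule LinearMap

theorem LinearMap.IsSymmetric.range_le_range_of_ker_le {𝕜 E : Type*} [RCLike 𝕜]
    [NormedAddCommGroup E] [InnerProductSpace 𝕜 E] [FiniteDimensional 𝕜 E]
    {S T : E →ₗ[𝕜] E} (hS : S.IsSymmetric) (hT : T.IsSymmetric) (h : ker T ≤ ker S) :
    range S ≤ range T :=
  calc range S = (ker S)ᗮ := by rw [← hS.orthogonal_range, orthogonal_orthogonal]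
    _ ≤ (ker T)ᗮ := orthogonal_le h
    _ = range T := by rw [← hT.orthogonal_range, orthogonal_orthogonal]

namespace Matrix

theorem range_mulVecLin_add_le {R m n : Type*} [CommSemiring R] [Fintype n]
    (M N : Matrix m n R) : range (M + N).mulVecLin ≤ range M.mulVecLin ⊔ range N.mulVecLin := by
  rw [mulVecLin_add]
  exact range_add_le _ _

variable {𝕜 ι : Type*} [RCLike 𝕜] [Fintype ι] {A B : Matrix ι ι 𝕜}

theorem IsHermitian.range_mulVecLin_le_of_ker_le [DecidableEq ι] (hA : A.IsHermitian)
    (hB : B.IsHermitian) (h : ker B.mulVecLin ≤ ker A.mulVecLin) :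
    range A.mulVecLin ≤ range B.mulVecLin := by
  have hE : ker B.toEuclideanLin ≤ ker A.toEuclideanLin := fun x hx => by
    simpa [toLpLin_apply] using h (by simpa [toLpLin_apply] using hx)
  rintro _ ⟨x, rfl⟩
  obtain ⟨y, hy⟩ := (isSymmetric_toEuclideanLin_iff.mpr hA).range_le_range_of_ker_le
    (isSymmetric_toEuclideanLin_iff.mpr hB) hE (mem_range_self _ (WithLp.toLp 2 x))
  exact ⟨WithLp.ofLp y, by simpa [toLpLin_apply] using hy⟩

theorem PosSemidef.ker_mulVecLin_le (hA : A.PosSemidef) (hBA : (B - A).PosSemidef) :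
    ker B.mulVecLin ≤ ker A.mulVecLin := fun x hx => by
  rw [mem_ker, mulVecLin_apply] at hx ⊢
  refine (hA.dotProduct_mulVec_zero_iff x).mp (le_antisymm ?_ (hA.dotProduct_mulVec_nonneg x))
  have := hBA.dotProduct_mulVec_nonneg x
  rwa [sub_mulVec, hx, zero_sub, dotProduct_neg, neg_nonneg] at this

theorem PosSemidef.range_mulVecLin_le [DecidableEq ι] (hA : A.PosSemidef)
    (hBA : (B - A).PosSemidef) : range A.mulVecLin ≤ range B.mulVecLin :=
  hA.isHermitian.range_mulVecLin_le_of_ker_le (by simpa using hBA.isHermitian.add hA.isHermitian)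
    (hA.ker_mulVecLin_le hBA)

end Matrix

section Subspaces

variable {K E : Type*} [Field K] [AddCommGroup E] [Module K E] [FiniteDimensional K E]

theorem Submodule.finrank_map_mkQ_add_finrank (P S : Submodule K E) :
    finrank K (P.map S.mkQ) + finrank K S = finrank K ↥(P ⊔ S) := by
  have hmap : (P ⊔ S).map S.mkQ = P.map S.mkQ := by
    rw [map_sup, mkQ_map_self, sup_bot_eq]
  have := LinearMap.finrank_range_add_finrank_ker (S.mkQ ∘ₗ (P ⊔ S).subtype)
  rwa [LinearMap.range_comp, range_subtype, hmap, LinearMap.ker_comp, ker_mkQ,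
    (comapSubtypeEquivOfLe le_sup_right).finrank_eq] at this

theorem LinearIndependent.exists_linearIndependent_sumElim {ι : Type*} [Fintype ι] {f : ι → E}
    (hf : LinearIndependent K f) (P : Submodule K E) {m : ℕ}
    (hm : m + Fintype.card ι ≤ finrank K ↥(P ⊔ span K (Set.range f))) :
    ∃ g : Fin m → E, (∀ i, g i ∈ P) ∧ LinearIndependent K (Sum.elim f g) := by
  set S := span K (Set.range f)
  have hQ : m ≤ finrank K (P.map S.mkQ) := by
    have := P.finrank_map_mkQ_add_finrank S
    rw [finrank_span_eq_card hf] at this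
    omega
  obtain ⟨y, hy⟩ := exists_linearIndependent_of_le_finrank hQ
  choose g hgP hgy using fun i => mem_map.mp (y i).2
  refine ⟨g, hgP, ?_⟩
  have hfS : LinearIndependent K fun i => (⟨f i, subset_span ⟨i, rfl⟩⟩ : S) :=
    .of_comp S.subtype hf
  refine hfS.sumElim_of_quotient g ?_
  have hgy' : Submodule.Quotient.mk ∘ g = (P.map S.mkQ).subtype ∘ y := funext hgy
  rw [hgy']
  exact hy.map' _ (ker_subtype _)

theorem Submodule.exists_mem_sup_span_singleton_eq_top {U V W : Submodule K E} {l : ℕ}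
    (hUV : U ≤ V) (hV : finrank K E ≤ finrank K V + 1) (hU : l ≤ finrank K U) (hW : W ≠ ⊥)
    (hUW : l + 1 ≤ finrank K ↥(U ⊔ W)) (hVW : V ⊔ W = ⊤) :
    ∃ w ∈ W, w ≠ 0 ∧ V ⊔ K ∙ w = ⊤ ∧ l + 1 ≤ finrank K ↥(U ⊔ K ∙ w) := by
  have hwU_sup : ∀ {w}, w ∉ U → w ≠ 0 ∧ l + 1 ≤ finrank K ↥(U ⊔ K ∙ w) := fun hwU =>
    ⟨fun h => hwU (h ▸ U.zero_mem), by rw [finrank_sup_span_singleton hwU]; omega⟩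
  by_cases hWV : W ≤ V
  · have hVtop : V = ⊤ := by rwa [sup_eq_left.mpr hWV] at hVW
    by_cases hWU : W ≤ U
    · obtain ⟨w, hwW, hw0⟩ := exists_mem_ne_zero_of_ne_bot hW
      refine ⟨w, hwW, hw0, by simp [hVtop], ?_⟩
      rwa [sup_eq_left.mpr ((span_singleton_le_iff_mem w U).mpr (hWU hwW)),
        ← sup_eq_left.mpr hWU]
    · obtain ⟨w, hwW, hwU⟩ := SetLike.not_le_iff_exists.mp hWU
      exact ⟨w, hwW, (hwU_sup hwU).1, by simp [hVtop], (hwU_sup hwU).2⟩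
  · obtain ⟨w, hwW, hwV⟩ := SetLike.not_le_iff_exists.mp hWV
    have hwU : w ∉ U := fun h => hwV (hUV h)
    refine ⟨w, hwW, (hwU_sup hwU).1, eq_top_of_finrank_eq ?_, (hwU_sup hwU).2⟩
    have := (V ⊔ K ∙ w).finrank_le
    rw [finrank_sup_span_singleton hwV] at this ⊢
    omega

theorem Submodule.exists_linearIndependent_of_le_of_sup_eq_top {U V W : Submodule K E} {n l : ℕ}
    (hE : finrank K E = n) (hUV : U ≤ V) (hV : n - 1 ≤ finrank K V) (hU : l ≤ finrank K U)
    (hW : W ≠ ⊥) (hUW : l + 1 ≤ finrank K ↥(U ⊔ W)) (hVW : V ⊔ W = ⊤) :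
    ∃ v : Fin n → E, LinearIndependent K v ∧
      (∀ i : Fin n, (i : ℕ) < l → v i ∈ U) ∧
      (∀ i : Fin n, l ≤ (i : ℕ) → (i : ℕ) < n - 1 → v i ∈ V) ∧
      (∀ i : Fin n, (i : ℕ) = n - 1 → v i ∈ W) := by
  obtain ⟨w, hwW, hw0, hVw, hUw⟩ :=
    exists_mem_sup_span_singleton_eq_top hUV (by omega) hU hW hUW hVW
  have hln : l + 1 ≤ n := hE ▸ hUw.trans (finrank_le _)
  obtain ⟨u, huU, hwu⟩ := (linearIndependent_unique_iff.mpr hw0 :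
    LinearIndependent K fun _ : Unit => w).exists_linearIndependent_sumElim U (m := l)
    (by rwa [Set.range_const, Fintype.card_unit])
  have hspan : V ⊔ span K (Set.range (Sum.elim (fun _ : Unit => w) u)) = ⊤ := by
    have hw : w ∈ span K (Set.range (Sum.elim (fun _ : Unit => w) u)) :=
      subset_span ⟨Sum.inl (), rfl⟩
    rw [eq_top_iff, ← hVw]
    exact sup_le_sup_left ((span_singleton_le_iff_mem _ _).mpr hw) V
  obtain ⟨x, hxV, hwux⟩ := hwu.exists_linearIndependent_sumElim V (m := n - 1 - l)
    (by rw [hspan, finrank_top, hE, Fintype.card_sum, Fintype.card_unit, Fintype.card_fin]; omega)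
  let g : Fin n → (Unit ⊕ Fin l) ⊕ Fin (n - 1 - l) := fun i =>
    if h : (i : ℕ) < l then .inl (.inr ⟨i, h⟩)
    else if h' : (i : ℕ) < n - 1 then .inr ⟨i - l, by omega⟩
    else .inl (.inl ())
  have hg : Function.Injective g := by
    intro a b hab
    simp only [g] at hab
    split_ifs at hab <;>
      simp only [reduceCtorEq, Sum.inl.injEq, Sum.inr.injEq, Fin.mk.injEq] at hab <;> omega
  refine ⟨_ ∘ g, hwux.comp g hg, fun i hi => ?_, fun i hli hi => ?_, fun i hi => ?_⟩
  · simpa [g, hi] using huU _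
  · simpa [g, hi, hli.not_gt] using hxV _
  · simpa [g, hi, (show l ≤ n - 1 by omega).not_gt] using hwW

end Subspaces

theorem stmt13_general (n l : ℕ)
    (A B C : Matrix (Fin n) (Fin n) ℂ)
    (hA : A.PosSemidef)
    (hBA : (B - A).PosSemidef)
    (hrB : n - 1 ≤ B.rank) (hrA : l ≤ A.rank) (hrC : 1 ≤ C.rank)
    (hrAC : l + 1 ≤ (A + C).rank) (hrBC : (B + C).rank = n) :
    ∃ v : Fin n → (Fin n → ℂ), LinearIndependent ℂ v ∧
      (∀ i : Fin n, (i : ℕ) < l → v i ∈ LinearMap.range A.mulVecLin) ∧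
      (∀ i : Fin n, l ≤ (i : ℕ) → (i : ℕ) < n - 1 → v i ∈ LinearMap.range B.mulVecLin) ∧
      (∀ i : Fin n, (i : ℕ) = n - 1 → v i ∈ LinearMap.range C.mulVecLin) := by
  have hE : finrank ℂ (Fin n → ℂ) = n := finrank_fin_fun ℂ
  have hW : range C.mulVecLin ≠ ⊥ := fun h => by
    simp [Matrix.rank, h] at hrC
  have hVW : range B.mulVecLin ⊔ range C.mulVecLin = ⊤ := by
    refine eq_top_of_finrank_eq (le_antisymm (finrank_le _) ?_)
    calc finrank ℂ (Fin n → ℂ) = (B + C).rank := hE.trans hrBC.symm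
      _ ≤ _ := finrank_mono (Matrix.range_mulVecLin_add_le B C)
  exact exists_linearIndependent_of_le_of_sup_eq_top hE (hA.range_mulVecLin_le hBA) hrB hrA hW
    (hrAC.trans (finrank_mono (Matrix.range_mulVecLin_add_le A C))) hVW

theorem stmt13 (n l : ℕ) (hn : 0 < n) (hl : l ≤ n - 1)
    (A B C : Matrix (Fin n) (Fin n) ℂ)
    (hA : A.PosSemidef) (hB : B.PosSemidef) (hC : C.PosSemidef)
    (hBA : (B - A).PosSemidef)
    (hrB : n - 1 ≤ B.rank) (hrA : l ≤ A.rank) (hrC : 1 ≤ C.rank)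
    (hrAC : l + 1 ≤ (A + C).rank) (hrBC : (B + C).rank = n) :
    ∃ v : Fin n → (Fin n → ℂ), LinearIndependent ℂ v ∧
      (∀ i : Fin n, (i : ℕ) < l → v i ∈ LinearMap.range A.mulVecLin) ∧
      (∀ i : Fin n, l ≤ (i : ℕ) → (i : ℕ) < n - 1 → v i ∈ LinearMap.range B.mulVecLin) ∧
      (∀ i : Fin n, (i : ℕ) = n - 1 → v i ∈ LinearMap.range C.mulVecLin) :=
  stmt13_general n l A B C hA hBA hrB hrA hrC hrAC hrBC
end

section
/- For n×n Hermitian positive semidefinite matrices, the rank function is submodular with respect to sums: if x, y, z are positive semidefinite matrices then rank(x + y + z) ≤ rank(x + y) + rank(y + z) − rank(y). -/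
open scoped ComplexOrder

/-!
For positive semidefinite `M`, `N` we have `ker (M + N) = ker M ∩ ker N`, because
`v⋆ (M + N) v = v⋆ M v + v⋆ N v` is a sum of nonnegative terms and `v⋆ M v = 0` forces `M v = 0`.
With `A = ker x`, `B = ker y`, `C = ker z`, rank–nullity turns the claim into
`dim (A ∩ B) + dim (B ∩ C) ≤ dim (A ∩ B ∩ C) + dim B`, which is the dimension formula for the
two subspaces `A ∩ B` and `B ∩ C` of `B`, whose intersection is `A ∩ B ∩ C`.
-/

open Module

namespace Submodule

variable {K V : Type*} [DivisionRing K] [AddCommGroup V] [Module K V] [FiniteDimensional K V]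

theorem finrank_inf_add_finrank_inf_le (a b c : Submodule K V) :
    finrank K ↥(a ⊓ b) + finrank K ↥(b ⊓ c) ≤ finrank K ↥(a ⊓ b ⊓ c) + finrank K b := by
  have hinf : a ⊓ b ⊓ (b ⊓ c) = a ⊓ b ⊓ c := by
    rw [inf_assoc, ← inf_assoc b, inf_idem, inf_assoc]
  have hsup : a ⊓ b ⊔ b ⊓ c ≤ b := sup_le inf_le_right inf_le_left
  calc finrank K ↥(a ⊓ b) + finrank K ↥(b ⊓ c)
      = finrank K ↥(a ⊓ b ⊔ b ⊓ c) + finrank K ↥(a ⊓ b ⊓ (b ⊓ c)) :=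
        (finrank_sup_add_finrank_inf_eq _ _).symm
    _ ≤ finrank K b + finrank K ↥(a ⊓ b ⊓ c) := by
        rw [hinf]
        gcongr
        exact finrank_mono hsup
    _ = finrank K ↥(a ⊓ b ⊓ c) + finrank K b := add_comm _ _

end Submodule

namespace Matrix

theorem rank_add_finrank_ker_mulVecLin {m ι K : Type*} [Fintype ι] [Field K]
    (M : Matrix m ι K) :
    M.rank + finrank K (LinearMap.ker M.mulVecLin) = Fintype.card ι := by
  rw [rank, LinearMap.finrank_range_add_finrank_ker, finrank_fintype_fun_eq_card]

theorem PosSemidef.ker_mulVecLin_add {ι 𝕜 : Type*} [Fintype ι] [RCLike 𝕜]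
    {M N : Matrix ι ι 𝕜} (hM : M.PosSemidef) (hN : N.PosSemidef) :
    LinearMap.ker (M + N).mulVecLin = LinearMap.ker M.mulVecLin ⊓ LinearMap.ker N.mulVecLin := by
  ext v
  simp only [LinearMap.mem_ker, mulVecLin_apply, Submodule.mem_inf]
  refine ⟨fun h => ?_, fun ⟨hMv, hNv⟩ => by rw [add_mulVec, hMv, hNv, add_zero]⟩
  have hsum : star v ⬝ᵥ M *ᵥ v + star v ⬝ᵥ N *ᵥ v = 0 := by
    rw [← dotProduct_add, ← add_mulVec, h, dotProduct_zero]
  obtain ⟨hMv, hNv⟩ := (add_eq_zero_iff_of_nonneg (hM.dotProduct_mulVec_nonneg v)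
    (hN.dotProduct_mulVec_nonneg v)).mp hsum
  exact ⟨(hM.dotProduct_mulVec_zero_iff v).mp hMv, (hN.dotProduct_mulVec_zero_iff v).mp hNv⟩

end Matrix

theorem stmt14 (n : ℕ) (x y z : Matrix (Fin n) (Fin n) ℂ)
    (hx : x.PosSemidef) (hy : y.PosSemidef) (hz : z.PosSemidef) :
    (x + y + z).rank + y.rank ≤ (x + y).rank + (y + z).rank := by
  have hxyz := (x + y + z).rank_add_finrank_ker_mulVecLin
  have hxy := (x + y).rank_add_finrank_ker_mulVecLin
  have hyz := (y + z).rank_add_finrank_ker_mulVecLin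
  have hy' := y.rank_add_finrank_ker_mulVecLin
  rw [(hx.add hy).ker_mulVecLin_add hz, hx.ker_mulVecLin_add hy] at hxyz
  rw [hx.ker_mulVecLin_add hy] at hxy
  rw [hy.ker_mulVecLin_add hz] at hyz
  have := Submodule.finrank_inf_add_finrank_inf_le
    (LinearMap.ker x.mulVecLin) (LinearMap.ker y.mulVecLin) (LinearMap.ker z.mulVecLin)
  omega
end

section
/- Suppose a set {X₁,...,Xₘ} of points in ℂⁿ and complex numbers c₁,...,cₘ satisfy: for every homogeneous polynomial p of degree n in n complex variables, ∂ⁿp/∂x₁···∂xₙ = ∑_{i=1}^{m} cᵢ p(Xᵢ). Then m ≥ C(n, ⌊n/2⌋) = n!/(⌊n/2⌋!·(n−⌊n/2⌋)!). -/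
/-!
For every `k ≤ n`, index rows by the `k`-subsets `S` of the variables and put
`W S j = c j * ∏_{i ∈ S} X j i` and `V j T = ∏_{i ∉ T} X j i`. Applying the hypothesis to the
degree-`n` polynomial `∏_{i ∈ S} x i * ∏_{i ∉ T} x i`, whose coefficient at `x 1 ⋯ x n` is
`[S = T]`, gives `W * V = 1`, so `C(n, k) ≤ rank W ≤ m`. The theorem takes `k = ⌊n/2⌋`.
-/

open MvPolynomial

theorem Matrix.card_le_card_of_mul_eq_one {ι κ K : Type*} [Fintype ι] [Fintype κ] [DecidableEq ι]
    [Field K] {W : Matrix ι κ K} {V : Matrix κ ι K} (h : W * V = 1) :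
    Fintype.card ι ≤ Fintype.card κ :=
  calc Fintype.card ι = (W * V).rank := by rw [h, Matrix.rank_one]
    _ ≤ W.rank := W.rank_mul_le_left V
    _ ≤ Fintype.card κ := W.rank_le_card_width

namespace MvPolynomial

variable {σ R : Type*} [CommSemiring R]

theorem prod_X_eq_monomial_sum_single (s : Finset σ) :
    ∏ i ∈ s, (X i : MvPolynomial σ R) = monomial (∑ i ∈ s, Finsupp.single i 1) 1 := by
  simp_rw [monomial_sum_one, ← X_pow_eq_monomial, pow_one]

theorem isHomogeneous_prod_X (s : Finset σ) :
    (∏ i ∈ s, (X i : MvPolynomial σ R)).IsHomogeneous s.card := by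
  simpa using IsHomogeneous.prod s (fun i => X i) (fun _ => 1) fun i _ => isHomogeneous_X R i

theorem sum_single_one_add_sum_compl_single_one_eq_ones_iff [Fintype σ] [DecidableEq σ]
    (s t : Finset σ) :
    (∑ i ∈ s, Finsupp.single i 1 + ∑ i ∈ tᶜ, Finsupp.single i 1 : σ →₀ ℕ) =
        Finsupp.equivFunOnFinite.symm (fun _ => 1) ↔ s = t := by
  simp only [Finsupp.ext_iff, Finset.ext_iff, Finsupp.add_apply, Finsupp.finsetSum_apply,
    Finsupp.single_apply, Finset.sum_ite_eq', Finsupp.coe_equivFunOnFinite_symm,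
    Finset.mem_compl]
  refine forall_congr' fun j => ?_
  by_cases hs : j ∈ s <;> by_cases ht : j ∈ t <;> simp [hs, ht]

theorem coeff_ones_prod_X_mul_prod_X_compl [Fintype σ] [DecidableEq σ] (s t : Finset σ) :
    ((∏ i ∈ s, X i) * ∏ i ∈ tᶜ, X i : MvPolynomial σ R).coeff
        (Finsupp.equivFunOnFinite.symm (fun _ => 1)) = if s = t then 1 else 0 := by
  rw [prod_X_eq_monomial_sum_single, prod_X_eq_monomial_sum_single, monomial_mul, one_mul,
    coeff_monomial,
    if_congr (sum_single_one_add_sum_compl_single_one_eq_ones_iff s t) rfl rfl]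

end MvPolynomial

open Finset in
theorem choose_le_card_of_coeff_eq_sum_eval {σ ι K : Type*} [Fintype σ] [Fintype ι] [Field K]
    (x : ι → σ → K) (c : ι → K)
    (h : ∀ p : MvPolynomial σ K, p.IsHomogeneous (Fintype.card σ) →
      p.coeff (Finsupp.equivFunOnFinite.symm (fun _ => 1)) = ∑ j, c j * eval (x j) p)
    {k : ℕ} (hk : k ≤ Fintype.card σ) :
    (Fintype.card σ).choose k ≤ Fintype.card ι := by
  classical
  let W : Matrix {s : Finset σ // #s = k} ι K := fun s j => c j * ∏ i ∈ s.1, x j i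
  let V : Matrix ι {s : Finset σ // #s = k} K := fun j t => ∏ i ∈ t.1ᶜ, x j i
  have hWV : W * V = 1 := by
    ext s t
    have hdeg : ((∏ i ∈ s.1, X i) * ∏ i ∈ t.1ᶜ, X i : MvPolynomial σ K).IsHomogeneous
        (Fintype.card σ) := by
      convert (isHomogeneous_prod_X s.1).mul (isHomogeneous_prod_X t.1ᶜ)
      rw [card_compl, s.2, t.2]
      omega
    have hst := h _ hdeg
    simp only [coeff_ones_prod_X_mul_prod_X_compl, Subtype.val_inj] at hst
    rw [Matrix.mul_apply, Matrix.one_apply, hst]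
    simp [W, V, mul_assoc]
  simpa [Fintype.card_finset_len] using Matrix.card_le_card_of_mul_eq_one hWV

theorem stmt15 (n m : ℕ) (X : Fin m → Fin n → ℂ) (c : Fin m → ℂ)
    (h : ∀ p : MvPolynomial (Fin n) ℂ, p.IsHomogeneous n →
      p.coeff (Finsupp.equivFunOnFinite.symm fun _ => 1) = ∑ i, c i * eval (X i) p) :
    Nat.choose n (n / 2) ≤ m := by
  simpa using choose_le_card_of_coeff_eq_sum_eval X c (by simpa using h) (k := n / 2)
    (by simp [Nat.div_le_self])
end

section
/- Let f : ℝⁿ → ℝ be a convex differentiable function with inf{f(y) : ∑ᵢ yᵢ = 0} > −∞, and suppose the Euler-type identity ∑ᵢ ∂f/∂yᵢ(y) = n holds for all y (as it does for f(y) = log q(e^{y₁},...,e^{yₙ}) with q homogeneous of degree n with positive coefficients). Then for every ε > 0 there exists a point y with ∑ᵢ yᵢ = 0 and ∑ᵢ (∂f/∂yᵢ(y) − 1)² ≤ ε. -/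
/-!
Restrict `f` to the hyperplane `H = {∑ yᵢ = 0}`. On a finite-dimensional space, a minimizer `z`
of the coercive function `f + δ‖·‖` satisfies `f z ≤ f w + δ‖w - z‖` for all `w`, which forces
`‖Df(z)‖ ≤ δ` (a weak Ekeland principle). By the Euler identity `v = ∇f(z) - 𝟙` lies in `H`, and
`Df(z) v = ∑ vᵢ (vᵢ + 1) = ∑ vᵢ²`, so `∑ vᵢ² ≤ δ ‖v‖∞ ≤ δ (∑ vᵢ²)^{1/2}`; take `δ = √ε`.
-/

open Filter Set

theorem exists_forall_le_add_mul_norm_sub {E : Type*} [SeminormedAddGroup E] [ProperSpace E]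
    {f : E → ℝ} {ε : ℝ} (hf : Continuous f) (hbdd : BddBelow (range f))
    (hε : 0 < ε) : ∃ z, ∀ w, f z ≤ f w + ε * ‖w - z‖ := by
  obtain ⟨L, hL⟩ := hbdd
  have hcoercive : Tendsto (fun w => f w + ε * ‖w‖) (cocompact E) atTop :=
    tendsto_atTop_mono (fun w => add_le_add_left (hL (mem_range_self w)) _)
      (tendsto_atTop_add_const_left _ L (tendsto_norm_cocompact_atTop.const_mul_atTop hε))
  obtain ⟨z, hz⟩ := (by fun_prop : Continuous fun w => f w + ε * ‖w‖).exists_forall_le hcoercive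
  refine ⟨z, fun w => ?_⟩
  nlinarith [hz w, norm_le_insert' w z]

section

variable {E : Type*} [NormedAddCommGroup E] [NormedSpace ℝ E] {f : E → ℝ} {z : E} {ε : ℝ}

theorem neg_mul_norm_le_fderiv_apply_of_forall_le_add (hf : DifferentiableAt ℝ f z)
    (hz : ∀ w, f z ≤ f w + ε * ‖w - z‖) (v : E) : -(ε * ‖v‖) ≤ fderiv ℝ f z v := by
  have hline : HasDerivAt (fun t : ℝ => f (z + t • v)) (fderiv ℝ f z v) 0 := by
    have hcurve : HasDerivAt (fun t : ℝ => z + t • v) v 0 := by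
      simpa using ((hasDerivAt_id (0 : ℝ)).smul_const v).const_add z
    exact hf.hasFDerivAt.comp_hasDerivAt_of_eq 0 hcurve (by simp)
  refine ge_of_tendsto hline.tendsto_slope_zero_right
    (eventually_nhdsWithin_of_forall fun t (ht : 0 < t) => ?_)
  have hstep := hz (z + t • v)
  rw [add_sub_cancel_left, norm_smul, Real.norm_of_nonneg ht.le] at hstep
  simp only [zero_add, zero_smul, add_zero, smul_eq_mul]
  rw [le_inv_mul_iff₀ ht]
  linarith

theorem norm_fderiv_le_of_forall_le_add (hf : DifferentiableAt ℝ f z)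
    (hz : ∀ w, f z ≤ f w + ε * ‖w - z‖) (hε : 0 ≤ ε) : ‖fderiv ℝ f z‖ ≤ ε := by
  refine ContinuousLinearMap.opNorm_le_bound _ hε fun v => abs_le.2 ⟨?_, ?_⟩
  · exact neg_mul_norm_le_fderiv_apply_of_forall_le_add hf hz v
  · have := neg_mul_norm_le_fderiv_apply_of_forall_le_add hf hz (-v)
    rw [norm_neg, map_neg] at this
    linarith

theorem exists_norm_fderiv_le [ProperSpace E] (hf : Differentiable ℝ f)
    (hbdd : BddBelow (range f)) (hε : 0 < ε) : ∃ z, ‖fderiv ℝ f z‖ ≤ ε := by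
  obtain ⟨z, hz⟩ := exists_forall_le_add_mul_norm_sub hf.continuous hbdd hε
  exact ⟨z, norm_fderiv_le_of_forall_le_add (hf z) hz hε.le⟩

end

section

variable (ι : Type*) [Fintype ι]

def sumZeroSubspace : Submodule ℝ (ι → ℝ) where
  carrier := {y | ∑ i, y i = 0}
  add_mem' {x y} hx hy := by simp_all [Finset.sum_add_distrib]
  zero_mem' := by simp
  smul_mem' c x hx := by simp_all [← Finset.mul_sum]

variable {ι}

theorem mem_sumZeroSubspace {y : ι → ℝ} : y ∈ sumZeroSubspace ι ↔ ∑ i, y i = 0 := Iff.rfl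

theorem ContinuousLinearMap.apply_eq_sum_mul_apply_single [DecidableEq ι]
    (ℓ : (ι → ℝ) →L[ℝ] ℝ) (x : ι → ℝ) : ℓ x = ∑ i, x i * ℓ (Pi.single i 1) := by
  conv_lhs => rw [← Finset.univ_sum_single x]
  refine (map_sum ℓ _ _).trans (Finset.sum_congr rfl fun i _ => ?_)
  rw [← smul_eq_mul, ← map_smul, ← Pi.single_smul', smul_eq_mul, mul_one]

theorem sum_sq_apply_single_sub_one_le [DecidableEq ι] (ℓ : (ι → ℝ) →L[ℝ] ℝ)
    (hℓ : ∑ i, ℓ (Pi.single i 1) = Fintype.card ι) {δ : ℝ}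
    (hδ : ‖ℓ.comp (sumZeroSubspace ι).subtypeL‖ ≤ δ) :
    ∑ i, (ℓ (Pi.single i 1) - 1) ^ 2 ≤ δ ^ 2 := by
  set v : ι → ℝ := fun i => ℓ (Pi.single i 1) - 1
  set S := ∑ i, v i ^ 2
  have hv : v ∈ sumZeroSubspace ι := by
    simp [mem_sumZeroSubspace, v, Finset.sum_sub_distrib, hℓ]
  have hℓv : ℓ v = S := by
    rw [ℓ.apply_eq_sum_mul_apply_single]
    have hv0 : ∑ i, v i = 0 := hv
    calc ∑ i, v i * ℓ (Pi.single i 1) = ∑ i, (v i ^ 2 + v i) := by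
          refine Finset.sum_congr rfl fun i _ => ?_
          simp only [v]; ring
      _ = S := by rw [Finset.sum_add_distrib, hv0, add_zero]
  have hvS : ‖v‖ ≤ √S := by
    refine (pi_norm_le_iff_of_nonneg (Real.sqrt_nonneg _)).2 fun i => ?_
    exact Real.abs_le_sqrt (Finset.single_le_sum (fun j _ => sq_nonneg (v j)) (Finset.mem_univ i))
  have hS0 : 0 ≤ S := Finset.sum_nonneg fun i _ => sq_nonneg (v i)
  have hSv : S ≤ δ * ‖v‖ := by
    have := (ℓ.comp (sumZeroSubspace ι).subtypeL).le_of_opNorm_le hδ ⟨v, hv⟩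
    simpa [hℓv, abs_of_nonneg hS0] using this
  have hδ0 : 0 ≤ δ := (ContinuousLinearMap.opNorm_nonneg _).trans hδ
  have := Real.sq_sqrt hS0
  nlinarith [Real.sqrt_nonneg S, mul_le_mul_of_nonneg_left hvS hδ0]

end

theorem stmt16_general (n : ℕ) (f : (Fin n → ℝ) → ℝ)
    (hdiff : Differentiable ℝ f)
    (hbdd : ∃ L : ℝ, ∀ y : Fin n → ℝ, ∑ i, y i = 0 → L ≤ f y)
    (heuler : ∀ y : Fin n → ℝ, ∑ i, fderiv ℝ f y (Pi.single i 1) = (n : ℝ)) :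
    ∀ ε : ℝ, 0 < ε → ∃ y : Fin n → ℝ, ∑ i, y i = 0 ∧
      ∑ i, (fderiv ℝ f y (Pi.single i 1) - 1) ^ 2 ≤ ε := by
  intro ε hε
  obtain ⟨L, hL⟩ := hbdd
  set H := sumZeroSubspace (Fin n)
  have hrestrict : ∀ y : H, HasFDerivAt (f ∘ H.subtypeL) ((fderiv ℝ f y).comp H.subtypeL) y :=
    fun y => (hdiff y).hasFDerivAt.comp y H.subtypeL.hasFDerivAt
  obtain ⟨y, hy⟩ := exists_norm_fderiv_le (fun y => (hrestrict y).differentiableAt)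
    ⟨L, by rintro _ ⟨y, rfl⟩; exact hL y y.2⟩ (Real.sqrt_pos.2 hε)
  rw [(hrestrict y).fderiv] at hy
  refine ⟨y, y.2, ?_⟩
  simpa [Real.sq_sqrt hε.le] using
    sum_sq_apply_single_sub_one_le (fderiv ℝ f y) (by simpa using heuler y) hy

theorem stmt16 (n : ℕ) (f : (Fin n → ℝ) → ℝ)
    (hconv : ConvexOn ℝ Set.univ f) (hdiff : Differentiable ℝ f)
    (hbdd : ∃ L : ℝ, ∀ y : Fin n → ℝ, ∑ i, y i = 0 → L ≤ f y)
    (heuler : ∀ y : Fin n → ℝ, ∑ i, fderiv ℝ f y (Pi.single i 1) = (n : ℝ)) :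
    ∀ ε : ℝ, 0 < ε → ∃ y : Fin n → ℝ, ∑ i, y i = 0 ∧
      ∑ i, (fderiv ℝ f y (Pi.single i 1) - 1) ^ 2 ≤ ε :=
  stmt16_general n f hdiff hbdd heuler
end

section
/- Let Pₖ(t) = ∑_{i=0}^{n} a_{i,k} tⁱ be a sequence of real univariate polynomials of degree n whose coefficients converge: a_{i,k} → aᵢ as k → ∞ for each i, with aₙ ≠ 0, and let P(t) = ∑ᵢ aᵢ tⁱ. If all roots of every Pₖ are real, then all roots of P are real; if moreover all roots of every Pₖ are real and nonnegative, then all roots of P are real and nonnegative. -/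
/-!
If `p` splits, then `‖p(z)‖ = ‖lc p‖ · ∏ ‖z - r‖` over its roots `r`, so `‖lc p‖ · dⁿ ≤ ‖p(z)‖`
as soon as `d` bounds from below the distance from `z` to every root. Applied to the `Pₖ` with
one `d` that works for all `k`, this survives the limit: `|aₙ| · dⁿ ≤ ‖P(z)‖`, hence `d = 0` at
every root `z` of `P`. For `z ∈ ℂ` take `d = |Im z|`; for `x < 0` and nonnegative roots of the
`Pₖ` take `d = -x`.
-/

open Polynomial Finset Filter Topology

namespace Polynomial

theorem Splits.norm_leadingCoeff_mul_pow_le_norm_aeval {K L : Type*} [Field K]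
    [NormedField L] [Algebra K L] {p : K[X]} (hp : p.Splits) (z : L) {d : ℝ} (hd0 : 0 ≤ d)
    (hd : ∀ r ∈ p.roots, d ≤ ‖z - algebraMap K L r‖) :
    ‖algebraMap K L p.leadingCoeff‖ * d ^ p.natDegree ≤ ‖aeval z p‖ := by
  rw [Splits.aeval_eq_prod_aroots (hp.map _), aroots_def, hp.roots_map, norm_mul]
  gcongr
  calc d ^ p.natDegree = (p.roots.map fun _ ↦ d).prod := by simp [hp.natDegree_eq_card_roots]
    _ ≤ (p.roots.map fun r ↦ ‖z - algebraMap K L r‖).prod :=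
      Multiset.prod_map_le_prod_map₀ _ _ (fun _ _ ↦ hd0) hd
    _ = _ := by
      rw [Multiset.map_map, ← normHom_apply, map_multiset_prod, Multiset.map_map]; rfl

theorem splits_of_forall_mem_aroots_im_eq_zero {p : ℝ[X]}
    (h : ∀ z ∈ p.aroots ℂ, z.im = 0) : p.Splits :=
  Splits.of_splits_map (algebraMap ℝ ℂ) (IsAlgClosed.splits _) fun z hz ↦
    ⟨z.re, Complex.ext (by simp) (by simp [h z hz])⟩

variable {R : Type*} [Semiring R]

theorem natDegree_sum_range_C_mul_X_pow {n : ℕ} {c : ℕ → R} (hc : c n ≠ 0) :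
    (∑ i ∈ range (n + 1), C (c i) * X ^ i).natDegree = n := by
  refine natDegree_eq_of_le_of_coeff_ne_zero ?_ (by simpa)
  refine natDegree_sum_le_of_forall_le _ _ fun i hi ↦ ?_
  exact (natDegree_C_mul_X_pow_le _ _).trans (Nat.lt_succ_iff.mp (mem_range.mp hi))

theorem leadingCoeff_sum_range_C_mul_X_pow {n : ℕ} {c : ℕ → R} (hc : c n ≠ 0) :
    (∑ i ∈ range (n + 1), C (c i) * X ^ i).leadingCoeff = c n := by
  simp [leadingCoeff, natDegree_sum_range_C_mul_X_pow hc]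

end Polynomial

theorem tendsto_aeval_sum_range_C_mul_X_pow {L : Type*} [NormedRing L] [NormedAlgebra ℝ L]
    {n : ℕ} {a : ℕ → ℕ → ℝ} {b : ℕ → ℝ}
    (hconv : ∀ i ≤ n, Tendsto (fun k ↦ a k i) atTop (𝓝 (b i))) (z : L) :
    Tendsto (fun k ↦ aeval z (∑ i ∈ range (n + 1), C (a k i) * X ^ i)) atTop
      (𝓝 (aeval z (∑ i ∈ range (n + 1), C (b i) * X ^ i))) := by
  simp only [map_sum, map_mul, aeval_C, map_pow, aeval_X]
  refine tendsto_finsetSum _ fun i hi ↦ ?_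
  exact (((continuous_algebraMap ℝ L).tendsto _).comp
    (hconv i (Nat.lt_succ_iff.mp (mem_range.mp hi)))).mul_const _

theorem eq_zero_of_le_norm_sub_roots_of_tendsto {L : Type*} [NormedField L] [NormedAlgebra ℝ L]
    {n : ℕ} {a : ℕ → ℕ → ℝ} {b : ℕ → ℝ}
    (hconv : ∀ i ≤ n, Tendsto (fun k ↦ a k i) atTop (𝓝 (b i))) (hbn : b n ≠ 0)
    (hsplits : ∀ k, (∑ i ∈ range (n + 1), C (a k i) * X ^ i).Splits) {z : L}
    (hz : aeval z (∑ i ∈ range (n + 1), C (b i) * X ^ i) = 0) {d : ℝ} (hd0 : 0 ≤ d)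
    (hd : ∀ k, ∀ r ∈ (∑ i ∈ range (n + 1), C (a k i) * X ^ i).roots,
      d ≤ ‖z - algebraMap ℝ L r‖) :
    d = 0 := by
  have hlim : |b n| * d ^ n ≤ 0 := by
    refine le_of_tendsto_of_tendsto ((hconv n le_rfl).abs.mul_const _)
      (by simpa [hz] using (tendsto_aeval_sum_range_C_mul_X_pow hconv z).norm) ?_
    -- `a k n → b n ≠ 0`, so eventually `Pₖ` has degree exactly `n`
    filter_upwards [(hconv n le_rfl).eventually_ne hbn] with k hk
    simpa [natDegree_sum_range_C_mul_X_pow hk, leadingCoeff_sum_range_C_mul_X_pow hk,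
      norm_algebraMap'] using (hsplits k).norm_leadingCoeff_mul_pow_le_norm_aeval z hd0 (hd k)
  have hpow : d ^ n = 0 :=
    le_antisymm (nonpos_of_mul_nonpos_right hlim (abs_pos.mpr hbn)) (by positivity)
  exact eq_zero_of_pow_eq_zero hpow

theorem stmt18_general (n : ℕ) (a : ℕ → ℕ → ℝ) (b : ℕ → ℝ)
    (hconv : ∀ i, i ≤ n → Filter.Tendsto (fun k => a k i) Filter.atTop (nhds (b i)))
    (hbn : b n ≠ 0)
    (hsplits : ∀ k, Splits
      ((∑ i ∈ Finset.range (n + 1), C (a k i) * X ^ i).map (RingHom.id ℝ))) :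
    Splits ((∑ i ∈ Finset.range (n + 1), C (b i) * X ^ i).map (RingHom.id ℝ)) ∧
    ((∀ k, ∀ x ∈ (∑ i ∈ Finset.range (n + 1), C (a k i) * X ^ i).roots, 0 ≤ x) →
      ∀ x ∈ (∑ i ∈ Finset.range (n + 1), C (b i) * X ^ i).roots, 0 ≤ x) := by
  simp only [Polynomial.map_id] at hsplits ⊢
  refine ⟨splits_of_forall_mem_aroots_im_eq_zero fun z hz ↦ ?_, fun hnonneg x hx ↦ ?_⟩
  · refine abs_eq_zero.mp (eq_zero_of_le_norm_sub_roots_of_tendsto hconv hbn hsplits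
      (mem_aroots.mp hz).2 (abs_nonneg z.im) fun k r _ ↦ ?_)
    simpa using Complex.abs_im_le_norm (z - r)
  · by_contra! hneg
    have hx0 : aeval x (∑ i ∈ range (n + 1), C (b i) * X ^ i) = 0 := by
      rw [coe_aeval_eq_eval]; exact (mem_roots'.mp hx).2
    have hdist : ∀ k, ∀ r ∈ (∑ i ∈ range (n + 1), C (a k i) * X ^ i).roots,
        -x ≤ ‖x - algebraMap ℝ ℝ r‖ := fun k r hr ↦ by
      have := hnonneg k r hr
      simpa using (show -x ≤ -(x - r) by linarith).trans (neg_le_abs _)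
    linarith [eq_zero_of_le_norm_sub_roots_of_tendsto hconv hbn hsplits hx0
      (neg_nonneg.mpr hneg.le) hdist]

theorem stmt18 (n : ℕ) (a : ℕ → ℕ → ℝ) (b : ℕ → ℝ)
    (hdeg : ∀ k, a k n ≠ 0)
    (hconv : ∀ i, i ≤ n → Filter.Tendsto (fun k => a k i) Filter.atTop (nhds (b i)))
    (hbn : b n ≠ 0)
    (hsplits : ∀ k, Splits
      ((∑ i ∈ Finset.range (n + 1), C (a k i) * X ^ i).map (RingHom.id ℝ))) :
    Splits ((∑ i ∈ Finset.range (n + 1), C (b i) * X ^ i).map (RingHom.id ℝ)) ∧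
    ((∀ k, ∀ x ∈ (∑ i ∈ Finset.range (n + 1), C (a k i) * X ^ i).roots, 0 ≤ x) →
      ∀ x ∈ (∑ i ∈ Finset.range (n + 1), C (b i) * X ^ i).roots, 0 ≤ x) :=
  stmt18_general n a b hconv hbn hsplits
end
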